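/- arXiv:2605.20504 — 4 statements merged into one kernel-verified Lean document; each statement's English description precedes it below -/
import Mathlib

section
/- For a ball-box distribution D (a surjection D: Z>0 → Z>0 with nonempty finite fibers of size at most ℓ and D(i) ≤ D(i+1) for all i), the corresponding binary word w_D (whose i-th letter is b if D(i)=D(i+1) and a otherwise) is abelian (k−1)-power free if and only if there is no k-term box progression with respect to D, i.e., no nontrivial k-term arithmetic progression h_1,...,h_k of positive integers such that D(h_1),...,D(h_k) is also an arithmetic progression. -/
def la : Bool := false
def lb : Bool := true

/-- Apply the binary morphism determined by `ha = h(a)`, `hb = h(b)` to a word. -/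
def applyM (ha hb : List Bool) (u : List Bool) : List Bool :=
  (u.map (fun c => if c then hb else ha)).flatten

/-- `w` is an abelian `k`-power: a concatenation of `k` nonempty pairwise anagram blocks. -/
def IsAbelianPow (k : Nat) (w : List Bool) : Prop :=
  ∃ vs : List (List Bool), vs.length = k ∧ (∀ v ∈ vs, v ≠ []) ∧
    vs.Pairwise List.Perm ∧ w = vs.flatten

/-- `w` contains an abelian `k`-power as a factor. -/
def ContainsAbelianPow (k : Nat) (w : List Bool) : Prop :=
  ∃ u, u <:+: w ∧ IsAbelianPow k u

/-- `w` is abelian `k`-power free. -/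
def AbelianPowFree (k : Nat) (w : List Bool) : Prop := ¬ ContainsAbelianPow k w

/-- The morphism `h` is abelian `k`-power free. -/
def MorphAbelianPowFree (k : Nat) (ha hb : List Bool) : Prop :=
  ∀ u : List Bool, AbelianPowFree k u → AbelianPowFree k (applyM ha hb u)

/-- `u` is a (finite) factor of the infinite word `W`. -/
def FactorOfInf (u : List Bool) (W : Nat → Bool) : Prop :=
  ∃ i : Nat, u = (List.range u.length).map (fun j => W (i + j))

/-- `u` is a prefix of the infinite word `W`. -/
def PrefixOfInf (u : List Bool) (W : Nat → Bool) : Prop :=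
  u = (List.range u.length).map W

/-- The binary word associated to a ball-box distribution `D` (balls and boxes labelled by
the positive integers): the `i`-th letter (for `i ≥ 1`, stored at index `i-1`) is `b = true`
iff balls `i` and `i+1` lie in the same box. -/
def wordOf (D : Nat → Nat) : Nat → Bool := fun n => decide (D (n+1) = D (n+2))

/-!
Since `D` is monotone and surjective it never skips a box, so the number of letters `a` in the
factor of `w_D` read between balls `i` and `j` is `D j - D i`. Cutting a factor into `k - 1` blocks
of common length `d`, the blocks are anagrams iff they contain equally many `a`s, i.e. iff
`D i, D (i + d), …, D (i + (k - 1) d)` is an arithmetic progression. A box progression with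
negative difference is reversed into one with positive difference.
-/

open List

def window (W : ℕ → Bool) (i n : ℕ) : List Bool := (range n).map fun j => W (i + j)

def blocks (W : ℕ → Bool) (i d m : ℕ) : List (List Bool) :=
  (range m).map fun j => window W (i + j * d) d

section Words
variable {W : ℕ → Bool} {i d : ℕ}

@[simp]
theorem length_window (W : ℕ → Bool) (i n : ℕ) : (window W i n).length = n := by
  simp [window]

theorem window_add (W : ℕ → Bool) (i m n : ℕ) :
    window W i (m + n) = window W i m ++ window W (i + m) n := by
  simp [window, range_add, Nat.add_assoc]

theorem flatten_blocks (W : ℕ → Bool) (i d m : ℕ) :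
    (blocks W i d m).flatten = window W i (m * d) := by
  induction m with
  | zero => simp [blocks, window]
  | succ m ih =>
    rw [blocks, range_succ, map_append, flatten_append, ← blocks, ih, Nat.succ_mul, window_add]
    simp

theorem window_mem_blocks {j m : ℕ} (hj : j < m) : window W (i + j * d) d ∈ blocks W i d m :=
  mem_map.2 ⟨j, mem_range.2 hj, rfl⟩

theorem eq_blocks_of_flatten_eq_window {vs : List (List Bool)} (hd : ∀ v ∈ vs, v.length = d)
    (h : vs.flatten = window W i vs.flatten.length) : vs = blocks W i d vs.length := by
  have hmap : vs.map length = replicate vs.length d :=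
    eq_replicate_iff.2 ⟨length_map _, by simpa using hd⟩
  have hlen : vs.flatten.length = vs.length * d := by
    rw [length_flatten, hmap, sum_replicate, smul_eq_mul]
  rw [eq_iff_flatten_eq, flatten_blocks, ← hlen, ← h, hmap]
  simp [blocks, Function.comp_def]

theorem exists_factorOfInf_isAbelianPow_iff (W : ℕ → Bool) (m : ℕ) :
    (∃ u, FactorOfInf u W ∧ IsAbelianPow m u) ↔
      ∃ i d, 0 < d ∧ (blocks W i d m).Pairwise Perm := by
  constructor
  · rintro ⟨u, ⟨i, hu⟩, vs, rfl, hne, hperm, rfl⟩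
    cases vs with
    | nil => exact ⟨i, 1, one_pos, by simp [blocks]⟩
    | cons v vs =>
      have hlen : ∀ w ∈ v :: vs, w.length = v.length := by
        rintro w (_ | ⟨_, hw⟩)
        exacts [rfl, ((pairwise_cons.1 hperm).1 w hw).length_eq.symm]
      refine ⟨i, v.length, length_pos_iff.2 (hne v mem_cons_self), ?_⟩
      rwa [← eq_blocks_of_flatten_eq_window hlen hu]
  · rintro ⟨i, d, hd, hperm⟩
    refine ⟨window W i (m * d), ⟨i, by rw [length_window]; rfl⟩, blocks W i d m, by simp [blocks],
      ?_, hperm, (flatten_blocks W i d m).symm⟩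
    simp only [blocks, mem_map, mem_range]
    rintro _ ⟨j, -, rfl⟩
    rw [← length_pos_iff, length_window]
    exact hd

end Words

theorem List.perm_iff_count_false_eq {u v : List Bool} (h : u.length = v.length) :
    u ~ v ↔ u.count false = v.count false := by
  refine ⟨fun hp => hp.count_eq false, fun hc => perm_iff_count.2 ?_⟩
  rintro (_ | _)
  · exact hc
  · have := count_true_add_count_false u
    have := count_true_add_count_false v
    omega

theorem Monotone.le_add_one_of_forall_exists_eq {f : ℕ → ℕ} (hf : Monotone f) {n : ℕ}
    (hsurj : ∀ m, f n < m → ∃ j, f j = m) : f (n + 1) ≤ f n + 1 := by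
  by_contra! hjump
  obtain ⟨j, hj⟩ := hsurj (f n + 1) (by omega)
  rcases le_or_gt j n with hjn | hnj
  · have := hf hjn; omega
  · have : f (n + 1) ≤ f j := hf hnj; omega

theorem forall_le_eq_add_mul_iff {f : ℕ → ℤ} {e : ℤ} {m : ℕ} :
    (∀ j ≤ m, f j = f 0 + j * e) ↔ ∀ j < m, f (j + 1) = f j + e := by
  constructor
  · intro h j hj
    rw [h (j + 1) (by omega), h j (by omega)]
    push_cast
    ring
  · intro h j hj
    induction j with
    | zero => simp
    | succ j ih =>
      rw [h j (by omega), ih (by omega)]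
      push_cast
      ring

theorem Fin.rev_progression {k : ℕ} (hk : 0 < k) {x : Fin k → ℤ} {d : ℤ}
    (hx : ∀ i : Fin k, x i = x ⟨0, hk⟩ + (i : ℕ) * d) (i : Fin k) :
    x i.rev = x (Fin.rev ⟨0, hk⟩) + (i : ℕ) * (-d) := by
  rw [hx i.rev, hx (Fin.rev ⟨0, hk⟩), Fin.val_rev, Fin.val_rev,
    Nat.cast_sub (show (i : ℕ) + 1 ≤ k from i.isLt), Nat.cast_sub (show 0 + 1 ≤ k from hk)]
  push_cast
  ring

section BallBox
variable {D : ℕ → ℕ}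

theorem count_false_window_wordOf (hmono : Monotone fun n => D (n + 1))
    (hstep : ∀ n, D (n + 2) ≤ D (n + 1) + 1) (i n : ℕ) :
    (window (wordOf D) i n).count false + D (i + 1) = D (i + n + 1) := by
  induction n with
  | zero => simp [window]
  | succ n ih =>
    have : D (i + n + 1) ≤ D (i + n + 2) := hmono (Nat.le_succ (i + n))
    have := hstep (i + n)
    rw [window_add, count_append, add_right_comm, ih, show i + (n + 1) + 1 = i + n + 2 by ring]
    by_cases h : D (i + n + 1) = D (i + n + 2) <;> simp [window, wordOf, h]
    omega

theorem pairwise_perm_blocks_wordOf_iff (hmono : Monotone fun n => D (n + 1))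
    (hstep : ∀ n, D (n + 2) ≤ D (n + 1) + 1) (i d m : ℕ) :
    (blocks (wordOf D) i d m).Pairwise Perm ↔
      ∃ e : ℤ, ∀ j ≤ m, (D (i + j * d + 1) : ℤ) = D (i + 1) + j * e := by
  set f : ℕ → ℤ := fun j => D (i + j * d + 1)
  have hcount (j : ℕ) :
      ((window (wordOf D) (i + j * d) d).count false : ℤ) = f (j + 1) - f j := by
    have := count_false_window_wordOf hmono hstep (i + j * d) d
    simp only [f, add_one_mul, ← add_assoc, ← this]
    push_cast
    ring
  have hf0 : f 0 = D (i + 1) := by simp [f]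
  calc (blocks (wordOf D) i d m).Pairwise Perm
      ↔ ∀ j < m, ∀ j' < m, f (j + 1) - f j = f (j' + 1) - f j' := by
        simp only [← hcount, Nat.cast_inj]
        constructor
        · intro h j hj j' hj'
          exact (perm_iff_count_false_eq (by simp)).1 (h.forall_of_forall (fun _ _ => Perm.refl _)
            (window_mem_blocks hj) (window_mem_blocks hj'))
        · intro h
          refine pairwise_of_forall_mem_list ?_
          simp only [blocks, mem_map, mem_range]
          rintro _ ⟨j, hj, rfl⟩ _ ⟨j', hj', rfl⟩
          exact (perm_iff_count_false_eq (by simp)).2 (h j hj j' hj')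
    _ ↔ ∃ e : ℤ, ∀ j < m, f (j + 1) = f j + e := by
        constructor
        · intro h
          refine ⟨f 1 - f 0, fun j hj => ?_⟩
          have := h j hj 0 (by omega)
          rw [zero_add] at this
          linarith
        · rintro ⟨e, he⟩ j hj j' hj'
          rw [he j hj, he j' hj']
          ring
    _ ↔ ∃ e : ℤ, ∀ j ≤ m, f j = f 0 + j * e :=
        exists_congr fun _ => forall_le_eq_add_mul_iff.symm
    _ ↔ _ := by rw [hf0]

theorem exists_boxProgression_iff {k : ℕ} (hk : 0 < k) :
    (∃ (h : Fin k → ℕ) (d e : ℤ), d ≠ 0 ∧ (∀ i, 1 ≤ h i) ∧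
        (∀ i : Fin k, (h i : ℤ) = (h ⟨0, hk⟩ : ℤ) + (i : ℕ) * d) ∧
        (∀ i : Fin k, (D (h i) : ℤ) = (D (h ⟨0, hk⟩) : ℤ) + (i : ℕ) * e)) ↔
      ∃ i d : ℕ, 0 < d ∧ ∃ e : ℤ, ∀ j ≤ k - 1, (D (i + j * d + 1) : ℤ) = D (i + 1) + j * e := by
  constructor
  · rintro ⟨h, d, e, hd, hpos, hh, hDh⟩
    wlog hd : 0 < d generalizing h d e
    · exact this (h ∘ Fin.rev) (-d) (-e) (by omega) (fun _ => hpos _)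
        (Fin.rev_progression hk (x := fun i => (h i : ℤ)) hh)
        (Fin.rev_progression hk (x := fun i => (D (h i) : ℤ)) hDh) (by omega)
    refine ⟨h ⟨0, hk⟩ - 1, d.toNat, by omega, e, fun j hj => ?_⟩
    have hidx : h ⟨0, hk⟩ - 1 + j * d.toNat + 1 = h ⟨j, by omega⟩ := by
      have := hh ⟨j, by omega⟩
      have := hpos ⟨0, hk⟩
      zify [this]
      rw [Int.toNat_of_nonneg hd.le]
      linarith
    rw [hidx, hDh, Nat.sub_add_cancel (hpos _)]
  · rintro ⟨i, d, hd, e, he⟩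
    refine ⟨fun j => i + j * d + 1, d, e, by exact_mod_cast hd.ne', fun _ => Nat.le_add_left 1 _,
      fun j => ?_, fun j => ?_⟩
    · push_cast
      ring
    · simpa using he j (by omega)

end BallBox

theorem ballBox_word_iff_no_BP (k : Nat) (hk : 2 ≤ k) (D : Nat → Nat)
    (hsurj : ∀ m, 1 ≤ m → ∃ i, 1 ≤ i ∧ D i = m)
    (hmono : ∀ i, 1 ≤ i → D i ≤ D (i+1)) :
    (∀ u : List Bool, FactorOfInf u (wordOf D) → ¬ IsAbelianPow (k-1) u) ↔
      ¬ ∃ (h : Fin k → Nat) (d e : Int), d ≠ 0 ∧ (∀ i, 1 ≤ h i) ∧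
        (∀ i : Fin k, (h i : Int) = (h ⟨0, by omega⟩ : Int) + (i : Nat) * d) ∧
        (∀ i : Fin k, (D (h i) : Int) = (D (h ⟨0, by omega⟩) : Int) + (i : Nat) * e) := by
  have hmono' : Monotone fun n => D (n + 1) :=
    monotone_nat_of_le_succ fun n => hmono (n + 1) (by omega)
  have hstep (n : ℕ) : D (n + 2) ≤ D (n + 1) + 1 :=
    hmono'.le_add_one_of_forall_exists_eq fun m hm => by
      obtain ⟨j, hj, rfl⟩ := hsurj m (Nat.one_le_of_lt hm)
      exact ⟨j - 1, by rw [Nat.sub_add_cancel hj]⟩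
  rw [exists_boxProgression_iff (by omega : 0 < k)]
  simp only [← pairwise_perm_blocks_wordOf_iff hmono' hstep,
    ← exists_factorOfInf_isAbelianPow_iff, not_exists, not_and]
end

section
/- Let h: {a,b}* → {a,b}* be the morphism with h(a) = aaaba and h(b) = bab, and let Ω_1 = h^ω(a) be its infinite fixed point starting with a. Then Ω_1 contains neither aaaaa nor bb as a factor. -/
/-! A seven-state scanner detects `aaaaa` and `bb`. Collapsing each run state `aₖ` to `a₁` turns
the scanner's run on a letter `c` into its run on the block `h(c)`, as long as no pattern has been
seen, so by induction the scanner never dies on `h^n(a)`. Since `|h^n(a)| ≥ 2^n`, every factor of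
the fixed point lies in some `h^n(a)`. -/

section Simulation

variable {σ : Type*} {δ : σ → Bool → σ} {dead : σ}

theorem foldl_of_absorbing (hdead : ∀ c, δ dead c = dead) (w : List Bool) :
    w.foldl δ dead = dead := by
  induction w with
  | nil => rfl
  | cons c w ih => rwa [List.foldl_cons, hdead]

theorem foldl_eq_of_infix (hdead : ∀ c, δ dead c = dead) {p w : List Bool}
    (hp : ∀ s, p.foldl δ s = dead) (hpw : p <:+: w) (s : σ) : w.foldl δ s = dead := by
  obtain ⟨l, r, rfl⟩ := hpw
  rw [List.foldl_append, List.foldl_append, hp, foldl_of_absorbing hdead]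

theorem foldl_applyM_map (φ : σ → σ) {ha hb : List Bool} (hdead : ∀ c, δ dead c = dead)
    (hblock : ∀ s c, δ s c ≠ dead → (if c then hb else ha).foldl δ (φ s) = φ (δ s c)) :
    ∀ (u : List Bool) (s : σ), u.foldl δ s ≠ dead →
      (applyM ha hb u).foldl δ (φ s) = φ (u.foldl δ s)
  | [], _, _ => rfl
  | c :: u, s, hu => by
    have hc : δ s c ≠ dead := fun h => hu (by rw [List.foldl_cons, h, foldl_of_absorbing hdead])
    simp only [applyM, List.map_cons, List.flatten_cons, List.foldl_append] at hu ⊢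
    rw [hblock s c hc]
    exact foldl_applyM_map φ hdead hblock u (δ s c) hu

theorem foldl_iterate_applyM_ne (φ : σ → σ) {ha hb : List Bool} (hdead : ∀ c, δ dead c = dead)
    (hblock : ∀ s c, δ s c ≠ dead → (if c then hb else ha).foldl δ (φ s) = φ (δ s c))
    (hφ : ∀ s, s ≠ dead → φ s ≠ dead) {s₀ : σ} (hs₀ : φ s₀ = s₀) {w : List Bool}
    (hw : w.foldl δ s₀ ≠ dead) (n : ℕ) : ((applyM ha hb)^[n] w).foldl δ s₀ ≠ dead := by
  induction n with
  | zero => exact hw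
  | succ n ih =>
    rw [Function.iterate_succ_apply', ← hs₀, foldl_applyM_map φ hdead hblock _ _ ih]
    exact hφ _ ih

end Simulation

theorem mul_length_le_length_applyM {k : ℕ} {ha hb : List Bool} (hka : k ≤ ha.length)
    (hkb : k ≤ hb.length) (u : List Bool) : k * u.length ≤ (applyM ha hb u).length := by
  induction u with
  | nil => simp
  | cons c u ih =>
    simp only [applyM, List.map_cons, List.flatten_cons, List.length_append,
      List.length_cons] at ih ⊢
    cases c <;> simp only [Bool.false_eq_true, ite_true, ite_false] <;> linarith

theorem pow_mul_length_le_length_iterate_applyM {k : ℕ} {ha hb : List Bool} (hka : k ≤ ha.length)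
    (hkb : k ≤ hb.length) (w : List Bool) (n : ℕ) :
    k ^ n * w.length ≤ ((applyM ha hb)^[n] w).length := by
  induction n with
  | zero => simp
  | succ n ih =>
    rw [Function.iterate_succ_apply', pow_succ']
    calc k * k ^ n * w.length = k * (k ^ n * w.length) := by ring
      _ ≤ k * ((applyM ha hb)^[n] w).length := Nat.mul_le_mul_left k ih
      _ ≤ _ := mul_length_le_length_applyM hka hkb _

theorem FactorOfInf.exists_infix_of_prefixOfInf {u : List Bool} {W : ℕ → Bool}
    (hu : FactorOfInf u W) :
    ∃ N, ∀ v, PrefixOfInf v W → N ≤ v.length → u <:+: v := by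
  obtain ⟨i, hi⟩ := hu
  refine ⟨i + u.length, fun v hv hlen => List.infix_iff_getElem?.mpr ⟨i, by omega, fun j hj => ?_⟩⟩
  have hu_j : u[j] = W (i + j) := by simpa using List.getElem_of_eq hi hj
  rw [hv, List.getElem?_map, List.getElem?_range (by omega), hu_j, add_comm]
  rfl

/-- A scanner for the patterns `aaaaa` and `bb` (letters `a = false`, `b = true`): `aₖ` after a
trailing run of exactly `k` letters `a`, `dead` once a pattern has occurred. -/
inductive ScanState
  | start | a₁ | a₂ | a₃ | a₄ | b | dead
  deriving DecidableEq

namespace ScanState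

def step : ScanState → Bool → ScanState
  | dead, _ => dead
  | b, true => dead
  | _, true => b
  | a₄, false => dead
  | a₃, false => a₄
  | a₂, false => a₃
  | a₁, false => a₂
  | _, false => a₁

/-- Every image `h(c)` ends in `ba` or `b`, so after reading `h(u)` the scanner only remembers
whether `u` ended in `a` or in `b`. -/
def collapse : ScanState → ScanState
  | start => start
  | b => b
  | dead => dead
  | _ => a₁

theorem step_dead (c : Bool) : step dead c = dead := rfl

theorem collapse_ne_dead : ∀ s, s ≠ dead → collapse s ≠ dead := by
  intro s; cases s <;> decide

theorem foldl_step_h_collapse : ∀ s c, step s c ≠ dead →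
    (if c then [lb, la, lb] else [la, la, la, lb, la]).foldl step (collapse s) =
      collapse (step s c) := by
  intro s c; cases s <;> cases c <;> decide

theorem foldl_step_iterate_h_ne_dead (n : ℕ) :
    ((applyM [la, la, la, lb, la] [lb, la, lb])^[n] [la]).foldl step start ≠ dead :=
  foldl_iterate_applyM_ne collapse step_dead foldl_step_h_collapse collapse_ne_dead rfl
    (by decide) n

theorem not_factorOfInf_of_foldl_eq_dead {p : List Bool} (hp : ∀ s, p.foldl step s = dead)
    {W : ℕ → Bool}
    (hW : ∀ n : Nat, PrefixOfInf ((applyM [la, la, la, lb, la] [lb, la, lb])^[n] [la]) W) :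
    ¬ FactorOfInf p W := fun hpW => by
  obtain ⟨N, hN⟩ := hpW.exists_infix_of_prefixOfInf
  have hlen : N ≤ ((applyM [la, la, la, lb, la] [lb, la, lb])^[N] [la]).length :=
    calc N ≤ 2 ^ N * [la].length := by simpa using Nat.lt_two_pow_self.le
      _ ≤ _ := pow_mul_length_le_length_iterate_applyM (by decide) (by decide) _ N
  exact foldl_step_iterate_h_ne_dead N
    (foldl_eq_of_infix step_dead hp (hN _ (hW N) hlen) start)

end ScanState

/-- the infinite fixed point of `h(a) = aaaba`, `h(b) = bab` starting with `a`
contains neither `aaaaa` nor `bb` as a factor. -/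
theorem fixedPoint_avoids_a5_bb (W : Nat → Bool)
    (hW : ∀ n : Nat, PrefixOfInf ((applyM [la,la,la,lb,la] [lb,la,lb])^[n] [la]) W) :
    ¬ FactorOfInf [la,la,la,la,la] W ∧ ¬ FactorOfInf [lb,lb] W :=
  ⟨ScanState.not_factorOfInf_of_foldl_eq_dead (fun s => by cases s <;> rfl) hW,
    ScanState.not_factorOfInf_of_foldl_eq_dead (fun s => by cases s <;> rfl) hW⟩
end

section
/- Every binary word over {a,b} of length 18 avoiding the factor bb contains an abelian 4-power, and the word babaaabaaabaaabab of length 17 avoids bb and contains no abelian 4-power. -/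
theorem List.splitLengths_map_length_flatten {α : Type*} (L : List (List α)) :
    (L.map List.length).splitLengths L.flatten = L := by
  induction L with
  | nil => rfl
  | cons v L ih => simp [ih]

theorem isAbelianPow_iff {k : ℕ} (hk : 0 < k) {u : List Bool} :
    IsAbelianPow k u ↔ u ≠ [] ∧ u.length = k * (u.length / k) ∧
      ((List.replicate k (u.length / k)).splitLengths u).Pairwise List.Perm := by
  constructor
  · rintro ⟨vs, rfl, hne, hperm, rfl⟩
    obtain ⟨v, vs', rfl⟩ := List.exists_cons_of_length_pos hk
    have hlen : vs'.map List.length = List.replicate vs'.length v.length := by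
      rw [List.eq_replicate_iff]
      simp only [List.length_map, List.mem_map, true_and]
      rintro _ ⟨w, hw, rfl⟩
      exact ((List.pairwise_cons.1 hperm).1 w hw).length_eq.symm
    have hflat : (v :: vs').flatten.length = (vs'.length + 1) * v.length := by
      simp [List.length_flatten, hlen, Nat.succ_mul, add_comm]
    rw [hflat, List.length_cons, Nat.mul_div_cancel_left _ (Nat.succ_pos _)]
    refine ⟨by simp [hne v List.mem_cons_self], rfl, ?_⟩
    rwa [List.replicate_succ, ← hlen, ← List.map_cons, List.splitLengths_map_length_flatten]
  · rintro ⟨hne, hlen, hperm⟩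
    have hsum : (List.replicate k (u.length / k)).sum = u.length := by
      rw [List.sum_replicate, smul_eq_mul, ← hlen]
    refine ⟨_, by simp, fun v hv => ?_, hperm, (List.flatten_splitLengths _ _ hsum.ge).symm⟩
    have hv : v.length ∈ List.replicate k (u.length / k) := by
      rw [← List.map_splitLengths_length u _ hsum.le]
      exact List.mem_map_of_mem hv
    rw [← List.length_pos_iff, (List.mem_replicate.1 hv).2]
    exact Nat.pos_of_ne_zero fun h => hne (List.eq_nil_of_length_eq_zero (by rw [hlen, h, mul_zero]))

theorem containsAbelianPow_iff {k : ℕ} {w : List Bool} :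
    ContainsAbelianPow k w ↔ ∃ t ∈ w.tails, ∃ u ∈ t.inits, IsAbelianPow k u := by
  simp only [ContainsAbelianPow, List.mem_tails, List.mem_inits, List.infix_iff_prefix_suffix]
  grind

instance (k : ℕ) [NeZero k] : DecidablePred (IsAbelianPow k) := fun _ =>
  decidable_of_iff' _ (isAbelianPow_iff (Nat.pos_of_neZero k))

instance (k : ℕ) [NeZero k] : DecidablePred (ContainsAbelianPow k) := fun _ =>
  decidable_of_iff' _ containsAbelianPow_iff

theorem ContainsAbelianPow.mono {k : ℕ} {u w : List Bool} (huw : u <:+: w)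
    (hu : ContainsAbelianPow k u) : ContainsAbelianPow k w :=
  let ⟨v, hvu, hv⟩ := hu
  ⟨v, hvu.trans huw, hv⟩

section Survivors

variable {α : Type*} (letters : List α) (P : List α → Prop) [DecidablePred P]

def survivors : ℕ → List (List α)
  | 0 => [[]]
  | n + 1 => ((survivors n).flatMap fun w => letters.map (· :: w)).filter P

variable {letters P}

theorem mem_survivors (hletters : ∀ a, a ∈ letters) (hP : ∀ a w, P (a :: w) → P w) :
    ∀ {w : List α}, P w → w ∈ survivors letters P w.length
  | [], _ => List.mem_singleton_self _
  | a :: w, hw => by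
    simp only [List.length_cons, survivors, List.mem_filter, List.mem_flatMap, List.mem_map]
    exact ⟨⟨w, mem_survivors hletters hP (hP a w hw), a, hletters a, rfl⟩, decide_eq_true hw⟩

end Survivors

/-- every binary word of length 18 avoiding `bb` contains an abelian 4-power,
and `babaaabaaabaaabab` (length 17) avoids `bb` and contains no abelian 4-power. -/
theorem length18_bbfree_has_abelian_4power :
    (∀ w : List Bool, w.length = 18 → ¬ [lb,lb] <:+: w → ContainsAbelianPow 4 w) ∧
    (¬ [lb,lb] <:+: [lb, la, lb, la, la, la, lb, la, la, la, lb, la, la, la, lb, la, lb] ∧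
      ¬ ContainsAbelianPow 4
        [lb, la, lb, la, la, la, lb, la, la, la, lb, la, la, la, lb, la, lb]) := by
  refine ⟨fun w hw hbb => ?_, by decide, by decide⟩
  let P : List Bool → Prop := fun w => ¬ [lb, lb] <:+: w ∧ ¬ ContainsAbelianPow 4 w
  have hP : ∀ a w, P (a :: w) → P w := fun a w ⟨hbb, h4⟩ =>
    have hw : w <:+: a :: w := (List.suffix_cons a w).isInfix
    ⟨fun h => hbb (h.trans hw), fun h => h4 (h.mono hw)⟩
  have hletters : ∀ c, c ∈ [la, lb] := by decide
  have hextinct : survivors [la, lb] P 18 = [] := by decide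
  by_contra h4
  have := mem_survivors hletters hP ⟨hbb, h4⟩
  rw [hw, hextinct] at this
  exact List.not_mem_nil this
end

section
/- Every binary word over {a,b} of length 25 avoiding both factors aaa and bb contains an abelian 5-power, and the word aababaababaababaababaaba of length 24 avoids aaa and bb and contains no abelian 5-power. -/
/-!
Both parts are finite computations. A word `u` is an abelian `k`-power exactly when `k` divides
`|u|` and the `k` consecutive blocks of length `|u| / k` are anagrams of the first one, which makes
abelian powers decidable block by block. Binary words avoiding `aaa`, `bb` and abelian 5-powers
are enumerated by prepending one letter at a time and testing only the new factors, the prefixes;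
no such word reaches length 25.
-/

def block {α : Type*} (m j : ℕ) (w : List α) : List α :=
  (w.drop (j * m)).take m

theorem flatten_map_block_range {α : Type*} (m k : ℕ) (w : List α) :
    ((List.range k).map fun j => block m j w).flatten = w.take (k * m) := by
  induction k with
  | zero => simp
  | succ k ih =>
    rw [List.range_succ, List.map_append, List.flatten_append, ih, Nat.succ_mul, List.take_add]
    simp [block]

theorem block_flatten {α : Type*} {m : ℕ} {vs : List (List α)} (hvs : ∀ v ∈ vs, v.length = m)
    {j : ℕ} (hj : j < vs.length) : block m j vs.flatten = vs[j] := by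
  induction vs generalizing j with
  | nil => simp at hj
  | cons v vs ih =>
    have hv : v.length = m := hvs v (by simp)
    cases j with
    | zero => simp [block, ← hv]
    | succ j =>
      have hdrop : (v :: vs).flatten.drop ((j + 1) * m) = vs.flatten.drop (j * m) := by
        rw [List.flatten_cons, Nat.succ_mul, Nat.add_comm, ← List.drop_drop, ← hv, List.drop_left]
      rw [block, hdrop]
      exact ih (fun u hu => hvs u (List.mem_cons_of_mem v hu)) (by simpa using hj)

theorem isAbelianPow_iff_s18 {k : ℕ} (hk : 0 < k) {u : List Bool} :
    IsAbelianPow k u ↔ 0 < u.length ∧ k ∣ u.length ∧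
      ∀ j < k, (block (u.length / k) j u).Perm (block (u.length / k) 0 u) := by
  constructor
  · rintro ⟨vs, hlen, hne, hpairwise, rfl⟩
    obtain ⟨v, vs', rfl⟩ := List.exists_cons_of_length_pos (hlen ▸ hk)
    have hperm : ∀ x ∈ v :: vs', x.Perm v := by
      rintro x (_ | ⟨_, hx⟩)
      · rfl
      · exact ((List.pairwise_cons.1 hpairwise).1 x hx).symm
    have hlen_eq : ∀ x ∈ v :: vs', x.length = v.length := fun x hx => (hperm x hx).length_eq
    have hflat : (v :: vs').flatten.length = k * v.length := by
      rw [List.length_flatten, List.map_congr_left hlen_eq, List.map_const', List.sum_replicate,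
        hlen, smul_eq_mul]
    have hv : 0 < v.length := List.length_pos_iff.2 (hne v List.mem_cons_self)
    rw [hflat, Nat.mul_div_cancel_left _ hk]
    refine ⟨Nat.mul_pos hk hv, dvd_mul_right k _, fun j hj => ?_⟩
    rw [block_flatten hlen_eq (hlen ▸ hj), block_flatten hlen_eq (hlen ▸ hk)]
    exact hperm _ (List.getElem_mem _)
  · rintro ⟨hpos, ⟨m, hm⟩, hperm⟩
    rw [hm, Nat.mul_div_cancel_left _ hk] at hperm
    have hm0 : 0 < m := Nat.pos_of_mul_pos_left (hm ▸ hpos)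
    have hblock_len : ∀ j < k, (block m j u).length = m := by
      intro j hj
      have : (j + 1) * m ≤ k * m := Nat.mul_le_mul_right m hj
      simp only [block, List.length_take, List.length_drop, hm]
      rw [Nat.succ_mul] at this
      omega
    refine ⟨(List.range k).map (block m · u), by simp, ?_, ?_, ?_⟩
    · simp only [List.mem_map, List.mem_range]
      rintro _ ⟨j, hj, rfl⟩
      exact List.ne_nil_of_length_pos ((hblock_len j hj).symm ▸ hm0)
    · refine List.pairwise_of_forall_mem_list ?_
      simp only [List.mem_map, List.mem_range]
      rintro _ ⟨i, hi, rfl⟩ _ ⟨j, hj, rfl⟩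
      exact (hperm i hi).trans (hperm j hj).symm
    · rw [flatten_map_block_range, ← hm, List.take_length]

instance (k : ℕ) (u : List Bool) : Decidable (IsAbelianPow (k + 1) u) :=
  decidable_of_iff _ (isAbelianPow_iff_s18 k.succ_pos).symm

theorem exists_infix_iff_exists_mem_tails_inits {α : Type*} {P : List α → Prop} {w : List α} :
    (∃ u, u <:+: w ∧ P u) ↔ ∃ t ∈ w.tails, ∃ u ∈ t.inits, P u := by
  simp only [List.mem_tails, List.mem_inits, List.infix_iff_prefix_suffix]
  aesop

instance (k : ℕ) (w : List Bool) : Decidable (ContainsAbelianPow (k + 1) w) :=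
  decidable_of_iff _ exists_infix_iff_exists_mem_tails_inits.symm

section Search

variable (bad : List Bool → Prop) [DecidablePred bad]

/-- Words are grown by prepending letters: the factors of `c :: w` that are not factors of `w`
are prefixes of `c :: w`, so only those are tested. -/
def wordsAvoiding : ℕ → List (List Bool)
  | 0 => [[]]
  | n + 1 => (wordsAvoiding n).flatMap fun w =>
      [false :: w, true :: w].filter fun v => ∀ u ∈ v.inits, ¬ bad u

theorem mem_wordsAvoiding {w : List Bool} (hw : ∀ u, u <:+: w → ¬ bad u) :
    w ∈ wordsAvoiding bad w.length := by
  induction w with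
  | nil => simp [wordsAvoiding]
  | cons c w ih =>
    have htail : ∀ u, u <:+: w → ¬ bad u :=
      fun u hu => hw u (hu.trans (List.suffix_cons c w).isInfix)
    have hpre : ∀ u ∈ (c :: w).inits, ¬ bad u :=
      fun u hu => hw u ((List.mem_inits _ _).1 hu).isInfix
    refine List.mem_flatMap.2 ⟨w, ih htail, ?_⟩
    exact List.mem_filter.2 ⟨by cases c <;> simp, decide_eq_true hpre⟩

end Search

theorem wordsAvoiding_aaa_bb_abelianPow_five_eq_nil :
    wordsAvoiding (fun u => u = [la, la, la] ∨ u = [lb, lb] ∨ IsAbelianPow 5 u) 25 = [] := by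
  decide

/-- every binary word of length 25 avoiding `aaa` and `bb` contains an abelian
5-power, and `aababaababaababaababaaba` (length 24) avoids both and has no abelian 5-power. -/
theorem length25_aaa_bb_free_has_abelian_5power :
    (∀ w : List Bool, w.length = 25 → ¬ [la,la,la] <:+: w → ¬ [lb,lb] <:+: w →
      ContainsAbelianPow 5 w) ∧
    (¬ [la,la,la] <:+:
        [la, la, lb, la, lb, la, la, lb, la, lb, la, la, lb, la, lb, la, la, lb, la, lb, la, la, lb, la] ∧
      ¬ [lb,lb] <:+:
        [la, la, lb, la, lb, la, la, lb, la, lb, la, la, lb, la, lb, la, la, lb, la, lb, la, la, lb, la] ∧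
      ¬ ContainsAbelianPow 5
        [la, la, lb, la, lb, la, la, lb, la, lb, la, la, lb, la, lb, la, la, lb, la, lb, la, la, lb, la]) := by
  refine ⟨fun w hlen haaa hbb => ?_, by decide, by decide, by decide⟩
  by_contra hfree
  have hw := mem_wordsAvoiding (fun u => u = [la, la, la] ∨ u = [lb, lb] ∨ IsAbelianPow 5 u)
    (w := w) (by rintro u hu (rfl | rfl | hpow); exacts [haaa hu, hbb hu, hfree ⟨u, hu, hpow⟩])
  rw [hlen, wordsAvoiding_aaa_bb_abelianPow_five_eq_nil] at hw
  exact List.not_mem_nil hw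
end
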